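/- Let u : ℝ × [0,∞) → ℝ be continuous, 2π-periodic in the first variable x, nonnegative, harmonic on the open half-cylinder ℝ × (0,∞) (i.e. C² with u_xx + u_yy = 0), with u(x,0) = 0 for all x, and with finite Dirichlet energy ∫_{(0,2π)×(0,∞)} |∇u|² dx dy < ∞. Then u ≡ 0. -/

import Mathlib

/-!
The flux `∫₀^{2π} u_y(x, y) dx` does not depend on `y`: its `y`-derivative is
`∫₀^{2π} u_yy dx = -∫₀^{2π} u_xx dx = 0` by periodicity. By Cauchy–Schwarz its square is at most
`2π ∫₀^{2π} u_y² dx`, so a nonzero flux would force infinite energy. With zero flux the mean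
`∫₀^{2π} u(x, y) dx` is constant in `y`, hence equal to its boundary value `0`, and a nonnegative
continuous periodic function with zero mean vanishes.
-/

open MeasureTheory Real

/-- Partial derivative in the first variable. -/
noncomputable def pX (u : ℝ × ℝ → ℝ) (p : ℝ × ℝ) : ℝ := deriv (fun t => u (t, p.2)) p.1

/-- Partial derivative in the second variable. -/
noncomputable def pY (u : ℝ × ℝ → ℝ) (p : ℝ × ℝ) : ℝ := deriv (fun t => u (p.1, t)) p.2

/-- Second partial derivative in the first variable. -/
noncomputable def pXX (u : ℝ × ℝ → ℝ) (p : ℝ × ℝ) : ℝ := deriv (fun t => pX u (t, p.2)) p.1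

/-- Second partial derivative in the second variable. -/
noncomputable def pYY (u : ℝ × ℝ → ℝ) (p : ℝ × ℝ) : ℝ := deriv (fun t => pY u (p.1, t)) p.2


open Set Filter Topology

section PartialDerivatives

variable {f : ℝ × ℝ → ℝ} {U : Set (ℝ × ℝ)} {p : ℝ × ℝ}

theorem hasDerivAt_pX (hf : DifferentiableAt ℝ f p) :
    HasDerivAt (fun t => f (t, p.2)) (pX f p) p.1 :=
  (hf.comp p.1 (differentiableAt_id.prodMk (differentiableAt_const _))).hasDerivAt

theorem hasDerivAt_pY (hf : DifferentiableAt ℝ f p) :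
    HasDerivAt (fun t => f (p.1, t)) (pY f p) p.2 :=
  (hf.comp p.2 ((differentiableAt_const _).prodMk differentiableAt_id)).hasDerivAt

theorem pX_eq_fderiv (hf : DifferentiableAt ℝ f p) : pX f p = fderiv ℝ f p (1, 0) :=
  (hf.hasFDerivAt.comp_hasDerivAt p.1
    ((hasDerivAt_id p.1).prodMk (hasDerivAt_const p.1 p.2))).deriv

theorem pY_eq_fderiv (hf : DifferentiableAt ℝ f p) : pY f p = fderiv ℝ f p (0, 1) :=
  (hf.hasFDerivAt.comp_hasDerivAt p.2
    ((hasDerivAt_const p.2 p.1).prodMk (hasDerivAt_id p.2))).deriv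

theorem contDiffOn_pX {n : WithTop ℕ∞} (hU : IsOpen U) (hf : ContDiffOn ℝ (n + 1) f U) :
    ContDiffOn ℝ n (pX f) U :=
  ((hf.fderiv_of_isOpen hU le_rfl).clm_apply contDiffOn_const).congr fun _ hq =>
    pX_eq_fderiv ((hf.differentiableOn (by simp)).differentiableAt (hU.mem_nhds hq))

theorem contDiffOn_pY {n : WithTop ℕ∞} (hU : IsOpen U) (hf : ContDiffOn ℝ (n + 1) f U) :
    ContDiffOn ℝ n (pY f) U :=
  ((hf.fderiv_of_isOpen hU le_rfl).clm_apply contDiffOn_const).congr fun _ hq =>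
    pY_eq_fderiv ((hf.differentiableOn (by simp)).differentiableAt (hU.mem_nhds hq))

theorem pX_add_period (T : ℝ) (hf : ∀ x y, f (x + T, y) = f (x, y)) (x y : ℝ) :
    pX f (x + T, y) = pX f (x, y) := by
  simp only [pX, ← deriv_comp_add_const, hf]

end PartialDerivatives

theorem isOpen_setOf_snd_pos : IsOpen {p : ℝ × ℝ | 0 < p.2} :=
  isOpen_lt continuous_const continuous_snd

theorem intervalIntegral_sub_eq_integral_integral {F G : ℝ × ℝ → ℝ} {a b c d : ℝ}
    (hab : a ≤ b) (hcd : c ≤ d)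
    (hF : ∀ x ∈ Icc a b, ∀ y ∈ Icc c d, HasDerivAt (fun t => F (x, t)) (G (x, y)) y)
    (hG : ContinuousOn G (Icc a b ×ˢ Icc c d)) :
    ∫ x in a..b, (F (x, d) - F (x, c)) = ∫ y in c..d, ∫ x in a..b, G (x, y) := by
  have hGint : Integrable G ((volume.restrict (Ioc a b)).prod (volume.restrict (Ioc c d))) := by
    rw [Measure.prod_restrict, ← Measure.volume_eq_prod]
    exact (hG.integrableOn_compact (isCompact_Icc.prod isCompact_Icc)).mono_set
      (prod_mono Ioc_subset_Icc_self Ioc_subset_Icc_self)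
  calc ∫ x in a..b, (F (x, d) - F (x, c)) = ∫ x in a..b, ∫ y in c..d, G (x, y) := by
        refine intervalIntegral.integral_congr fun x hx => ?_
        rw [uIcc_of_le hab] at hx
        have hGx : ContinuousOn (fun y => G (x, y)) (uIcc c d) := by
          rw [uIcc_of_le hcd]
          exact hG.comp (Continuous.continuousOn (by fun_prop)) fun y hy => ⟨hx, hy⟩
        refine (intervalIntegral.integral_eq_sub_of_hasDerivAt (fun y hy => hF x hx y ?_)
          hGx.intervalIntegrable).symm
        rwa [uIcc_of_le hcd] at hy
    _ = ∫ y in c..d, ∫ x in a..b, G (x, y) := by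
        simp only [intervalIntegral.integral_of_le hab, intervalIntegral.integral_of_le hcd]
        exact integral_integral_swap hGint

theorem sq_intervalIntegral_le {f : ℝ → ℝ} (hf : Continuous f) {a b : ℝ} (hab : a ≤ b) :
    (∫ x in a..b, f x) ^ 2 ≤ (b - a) * ∫ x in a..b, f x ^ 2 := by
  have hquad : ∀ k : ℝ, 0 ≤ (b - a) * (k * k) + (-2 * ∫ x in a..b, f x) * k
      + ∫ x in a..b, f x ^ 2 := by
    intro k
    have hexpand : ∫ x in a..b, (f x - k) ^ 2
        = (∫ x in a..b, f x ^ 2) - 2 * k * (∫ x in a..b, f x) + (b - a) * k ^ 2 := by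
      simp only [sub_sq]
      rw [intervalIntegral.integral_add, intervalIntegral.integral_sub,
        intervalIntegral.integral_mul_const, intervalIntegral.integral_const_mul,
        intervalIntegral.integral_const, smul_eq_mul]
      all_goals first | exact Continuous.intervalIntegrable (by fun_prop) _ _ | ring
    have hnonneg : 0 ≤ ∫ x in a..b, (f x - k) ^ 2 :=
      intervalIntegral.integral_nonneg hab fun x _ => sq_nonneg (f x - k)
    linarith
  have := discrim_le_zero hquad
  rw [discrim] at this
  linarith

theorem Function.Periodic.eq_zero_of_intervalIntegral_eq_zero {f : ℝ → ℝ} {T : ℝ}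
    (hper : Function.Periodic f T) (hT : 0 < T) (hf : Continuous f) (hnonneg : 0 ≤ f)
    (hint : ∫ x in (0 : ℝ)..T, f x = 0) (x : ℝ) : f x = 0 := by
  by_contra hx
  have hpos : 0 < ∫ t in (x - T / 2)..(x - T / 2 + T), f t := by
    rw [intervalIntegral.integral_pos_iff_support_of_nonneg_ae (ae_of_all _ hnonneg)
      (hf.intervalIntegrable _ _)]
    refine ⟨by linarith, ?_⟩
    have hopen : IsOpen (Function.support f ∩ Ioo (x - T / 2) (x - T / 2 + T)) :=
      (isOpen_compl_singleton.preimage hf).inter isOpen_Ioo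
    exact (hopen.measure_pos volume ⟨x, hx, by constructor <;> linarith⟩).trans_le
      (measure_mono (inter_subset_inter_right _ Ioo_subset_Ioc_self))
  rw [hper.intervalIntegral_add_eq (x - T / 2) 0, zero_add, hint] at hpos
  exact hpos.false

noncomputable def horizontalIntegral (f : ℝ × ℝ → ℝ) (y : ℝ) : ℝ :=
  ∫ x in (0 : ℝ)..2 * π, f (x, y)

theorem horizontalIntegral_sub_eq {F G : ℝ × ℝ → ℝ} (hF : ContinuousOn F {p | 0 < p.2})
    (hG : ContinuousOn G {p | 0 < p.2})
    (hFG : ∀ p : ℝ × ℝ, 0 < p.2 → HasDerivAt (fun t => F (p.1, t)) (G p) p.2)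
    {y₁ y₂ : ℝ} (h₁ : 0 < y₁) (h₁₂ : y₁ ≤ y₂) :
    horizontalIntegral F y₂ - horizontalIntegral F y₁ = ∫ y in y₁..y₂, horizontalIntegral G y := by
  have hint : ∀ y, 0 < y → IntervalIntegrable (fun x => F (x, y)) volume 0 (2 * π) := fun y hy =>
    (hF.comp_continuous (by fun_prop) fun _ => hy).intervalIntegrable _ _
  rw [horizontalIntegral, horizontalIntegral,
    ← intervalIntegral.integral_sub (hint _ (h₁.trans_le h₁₂)) (hint _ h₁)]
  exact intervalIntegral_sub_eq_integral_integral two_pi_pos.le h₁₂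
    (fun x _ y hy => hFG (x, y) (h₁.trans_le hy.1)) (hG.mono fun p hp => h₁.trans_le hp.2.1)

section HalfCylinder

variable {u : ℝ × ℝ → ℝ}

theorem horizontalIntegral_pXX_eq_zero (hC2 : ContDiffOn ℝ 2 u {p : ℝ × ℝ | 0 < p.2})
    (hper : ∀ x y : ℝ, u (x + 2 * π, y) = u (x, y)) {y : ℝ} (hy : 0 < y) :
    horizontalIntegral (pXX u) y = 0 := by
  have hpX : ContDiffOn ℝ 1 (pX u) {p : ℝ × ℝ | 0 < p.2} :=
    contDiffOn_pX isOpen_setOf_snd_pos hC2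
  have hpXX : ContinuousOn (pXX u) {p : ℝ × ℝ | 0 < p.2} :=
    (contDiffOn_pX (n := 0) isOpen_setOf_snd_pos hpX).continuousOn
  rw [horizontalIntegral, intervalIntegral.integral_eq_sub_of_hasDerivAt
    (f := fun x => pX u (x, y)) (f' := fun x => pXX u (x, y))
    (fun x _ => hasDerivAt_pX ((hpX.differentiableOn one_ne_zero).differentiableAt
      (isOpen_setOf_snd_pos.mem_nhds (show 0 < (x, y).2 from hy))))
    ((hpXX.comp_continuous (by fun_prop) fun _ => hy).intervalIntegrable _ _),
    sub_eq_zero, ← zero_add (2 * π), pX_add_period (2 * π) hper]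

theorem horizontalIntegral_pY_eq (hC2 : ContDiffOn ℝ 2 u {p : ℝ × ℝ | 0 < p.2})
    (hper : ∀ x y : ℝ, u (x + 2 * π, y) = u (x, y))
    (hharm : ∀ p : ℝ × ℝ, 0 < p.2 → pXX u p + pYY u p = 0)
    {y₁ y₂ : ℝ} (h₁ : 0 < y₁) (h₁₂ : y₁ ≤ y₂) :
    horizontalIntegral (pY u) y₂ = horizontalIntegral (pY u) y₁ := by
  have hpY : ContDiffOn ℝ 1 (pY u) {p : ℝ × ℝ | 0 < p.2} :=
    contDiffOn_pY isOpen_setOf_snd_pos hC2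
  have hpYY : ContinuousOn (pYY u) {p : ℝ × ℝ | 0 < p.2} :=
    (contDiffOn_pY (n := 0) isOpen_setOf_snd_pos hpY).continuousOn
  have hsub := horizontalIntegral_sub_eq hpY.continuousOn hpYY
    (fun p hp => hasDerivAt_pY ((hpY.differentiableOn one_ne_zero).differentiableAt
      (isOpen_setOf_snd_pos.mem_nhds hp))) h₁ h₁₂
  have hzero : ∀ y ∈ uIcc y₁ y₂, horizontalIntegral (pYY u) y = 0 := by
    intro y hy
    rw [uIcc_of_le h₁₂] at hy
    have hy₀ : 0 < y := h₁.trans_le hy.1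
    have hswap : horizontalIntegral (pYY u) y = -horizontalIntegral (pXX u) y := by
      rw [horizontalIntegral, horizontalIntegral, ← intervalIntegral.integral_neg]
      exact intervalIntegral.integral_congr fun x _ =>
        eq_neg_of_add_eq_zero_right (hharm (x, y) hy₀)
    rw [hswap, horizontalIntegral_pXX_eq_zero hC2 hper hy₀, neg_zero]
  rw [intervalIntegral.integral_congr hzero, intervalIntegral.integral_zero] at hsub
  linarith

theorem horizontalIntegral_pY_eq_zero (hC2 : ContDiffOn ℝ 2 u {p : ℝ × ℝ | 0 < p.2})
    (hper : ∀ x y : ℝ, u (x + 2 * π, y) = u (x, y))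
    (hharm : ∀ p : ℝ × ℝ, 0 < p.2 → pXX u p + pYY u p = 0)
    (henergy : IntegrableOn (fun p => pX u p ^ 2 + pY u p ^ 2)
      (Ioo (0 : ℝ) (2 * π) ×ˢ Ioi (0 : ℝ)))
    {y₀ : ℝ} (hy₀ : 0 < y₀) : horizontalIntegral (pY u) y₀ = 0 := by
  set a := horizontalIntegral (pY u) y₀
  by_contra ha
  have hpY : ContinuousOn (pY u) {p : ℝ × ℝ | 0 < p.2} :=
    (contDiffOn_pY (n := 1) isOpen_setOf_snd_pos hC2).continuousOn
  have hsq : IntegrableOn (fun p => pY u p ^ 2) (Ioo (0 : ℝ) (2 * π) ×ˢ Ioi (0 : ℝ)) :=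
    henergy.mono' (((hpY.mono fun p hp => hp.2).pow 2).aestronglyMeasurable
      (measurableSet_Ioo.prod measurableSet_Ioi))
      (ae_of_all _ fun p => by simp only [norm_pow, Real.norm_eq_abs, sq_abs]; nlinarith)
  rw [IntegrableOn, Measure.volume_eq_prod, ← Measure.prod_restrict] at hsq
  have hslices := hsq.integral_prod_right
  have hbound :
      Ioi y₀ ⊆ {y | a ^ 2 / (2 * π) ≤ ‖∫ x in Ioo (0 : ℝ) (2 * π), pY u (x, y) ^ 2‖} := by
    intro y hy
    have hslice : Continuous fun x => pY u (x, y) :=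
      hpY.comp_continuous (by fun_prop) fun _ => hy₀.trans hy
    have hcs := sq_intervalIntegral_le hslice two_pi_pos.le
    rw [← horizontalIntegral, horizontalIntegral_pY_eq hC2 hper hharm hy₀ (le_of_lt hy),
      intervalIntegral.integral_of_le two_pi_pos.le, integral_Ioc_eq_integral_Ioo] at hcs
    rw [mem_ofPred_eq, Real.norm_eq_abs, div_le_iff₀' two_pi_pos]
    exact hcs.trans (by simp only [sub_zero]; gcongr; exact le_abs_self _)
  have hfinite := hslices.measure_norm_ge_lt_top (ε := a ^ 2 / (2 * π)) (by positivity)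
  refine hfinite.not_ge ?_
  calc ⊤ = volume (Ioi y₀) := Real.volume_Ioi.symm
    _ = volume.restrict (Ioi 0) (Ioi y₀) := by
        rw [Measure.restrict_apply measurableSet_Ioi, inter_eq_left.2 (Ioi_subset_Ioi hy₀.le)]
    _ ≤ _ := measure_mono hbound

theorem tendsto_horizontalIntegral_nhdsGT_zero (hcont : ContinuousOn u {p : ℝ × ℝ | 0 ≤ p.2}) :
    Tendsto (horizontalIntegral u) (𝓝[>] 0) (𝓝 (horizontalIntegral u 0)) := by
  -- clamping the height at `0` extends `u` continuously to the whole plane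
  have hclamp : Continuous fun y : ℝ => horizontalIntegral u (max y 0) :=
    intervalIntegral.continuous_parametric_intervalIntegral_of_continuous'
      (f := fun y x => u (x, max y 0))
      (hcont.comp_continuous (by fun_prop) fun q => le_max_right q.1 0) _ _
  have hlim := (hclamp.tendsto 0).mono_left (nhdsWithin_le_nhds (s := Ioi 0))
  rw [max_self] at hlim
  refine hlim.congr' ?_
  filter_upwards [self_mem_nhdsWithin] with y hy
  rw [max_eq_left (le_of_lt hy)]

theorem horizontalIntegral_eq_zero (hcont : ContinuousOn u {p : ℝ × ℝ | 0 ≤ p.2})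
    (hC2 : ContDiffOn ℝ 2 u {p : ℝ × ℝ | 0 < p.2}) (hbdry : ∀ x : ℝ, u (x, 0) = 0)
    (hflux : ∀ y, 0 < y → horizontalIntegral (pY u) y = 0) {y₀ : ℝ} (hy₀ : 0 < y₀) :
    horizontalIntegral u y₀ = 0 := by
  have hconst : ∀ y ∈ Ioo 0 y₀, horizontalIntegral u y₀ = horizontalIntegral u y := by
    intro y hy
    have hsub := horizontalIntegral_sub_eq hC2.continuousOn
      (contDiffOn_pY (n := 1) isOpen_setOf_snd_pos hC2).continuousOn
      (fun p hp => hasDerivAt_pY ((hC2.differentiableOn two_ne_zero).differentiableAt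
        (isOpen_setOf_snd_pos.mem_nhds hp))) hy.1 hy.2.le
    rw [intervalIntegral.integral_congr (g := fun _ => 0) fun t ht =>
      hflux t (hy.1.trans_le (uIcc_of_le hy.2.le ▸ ht).1), intervalIntegral.integral_zero] at hsub
    linarith
  have hlim := tendsto_horizontalIntegral_nhdsGT_zero hcont
  rw [show horizontalIntegral u 0 = 0 by simp [horizontalIntegral, hbdry]] at hlim
  exact tendsto_nhds_unique
    (tendsto_const_nhds.congr' (eventually_of_mem (Ioo_mem_nhdsGT hy₀) hconst)) hlim

end HalfCylinder

/-- A nonnegative harmonic function of finite energy on the half-cylinder,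
vanishing on the boundary circle, is identically zero. -/
theorem statement2 (u : ℝ × ℝ → ℝ)
    (hcont : ContinuousOn u {p : ℝ × ℝ | 0 ≤ p.2})
    (hper : ∀ x y : ℝ, u (x + 2 * π, y) = u (x, y))
    (hnonneg : ∀ p : ℝ × ℝ, 0 ≤ p.2 → 0 ≤ u p)
    (hC2 : ContDiffOn ℝ 2 u {p : ℝ × ℝ | 0 < p.2})
    (hharm : ∀ p : ℝ × ℝ, 0 < p.2 → pXX u p + pYY u p = 0)
    (hbdry : ∀ x : ℝ, u (x, 0) = 0)
    (henergy : IntegrableOn (fun p => pX u p ^ 2 + pY u p ^ 2)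
      (Set.Ioo (0 : ℝ) (2 * π) ×ˢ Set.Ioi (0 : ℝ)))
    (p : ℝ × ℝ) (hp : 0 ≤ p.2) : u p = 0 := by
  obtain ⟨x, y⟩ := p
  dsimp only at hp
  obtain hy | hy := hp.eq_or_lt
  · rw [← hy]
    exact hbdry x
  have hflux := fun t (ht : 0 < t) => horizontalIntegral_pY_eq_zero hC2 hper hharm henergy ht
  exact Function.Periodic.eq_zero_of_intervalIntegral_eq_zero (f := fun t => u (t, y))
    (fun t => hper t y) two_pi_pos (hcont.comp_continuous (by fun_prop) fun _ => hp)
    (fun t => hnonneg (t, y) hp)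
    (horizontalIntegral_eq_zero hcont hC2 hbdry hflux hy) x
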